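/- The order type of (T_2[0], <), the addition-free theta-term notation system with two function symbols ϑ_0, ϑ_1 restricted to terms α with S(α) ≤ 0, is exactly ω^(ω^ω). -/

import Mathlib

/-- Addition-free theta terms. -/
inductive TTerm : Type
  | zero : TTerm
  | theta : ℕ → TTerm → TTerm
  deriving DecidableEq

namespace TTerm

/-- `S 0 = -1`, `S (ϑ_i α) = i`. -/
def S : TTerm → ℤ
  | zero => -1
  | theta i _ => i

/-- Membership in the term system `T`: `ϑ_i α` is formed only when `S α ≤ i + 1`. -/
inductive WF : TTerm → Prop
  | zero : WF zero
  | theta {i : ℕ} {a : TTerm} : WF a → S a ≤ (i : ℤ) + 1 → WF (theta i a)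

/-- Coefficients `k_i`. -/
def k (i : ℕ) : TTerm → TTerm
  | zero => zero
  | theta j b => if j ≤ i then theta j b else k i b

mutual
/-- The linear order on theta terms. -/
inductive Lt : TTerm → TTerm → Prop
  | zero {a : TTerm} : a ≠ zero → Lt zero a
  | idx {i j : ℕ} {a b : TTerm} : i < j → Lt (theta i a) (theta j b)
  | left {i : ℕ} {a b : TTerm} : Lt a b → Lt (k i a) (theta i b) →
      Lt (theta i a) (theta i b)
  | right {i : ℕ} {a b : TTerm} : Lt b a → Le (theta i a) (k i b) →
      Lt (theta i a) (theta i b)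

inductive Le : TTerm → TTerm → Prop
  | refl {a : TTerm} : Le a a
  | of_lt {a b : TTerm} : Lt a b → Le a b
end

end TTerm

/-- All indices occurring in a term are `< n`. -/
def TTerm.idxBound (n : ℕ) : TTerm → Prop
  | TTerm.zero => True
  | TTerm.theta i a => i < n ∧ TTerm.idxBound n a

/-- Membership in `T_2[0]`: well-formed, indices `< 2`, and `S α ≤ 0`. -/
def T2zero (t : TTerm) : Prop := TTerm.WF t ∧ TTerm.idxBound 2 t ∧ TTerm.S t ≤ 0

/-!
Terms with indices `< 2` are valued in the ordinals: `0 ↦ 0`, `ϑ₁ z ↦ Ω * (1 + z)` with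
`Ω = ω ^ ω ^ ω`, and `ϑ₀ ϑ₁^n β`, for `β` of value `α` with `S β ≤ 0`, goes to `α + 1` if `n = 0`
and otherwise to the `α`-th ordinal divisible by `ω ^ ω ^ (n - 1)` but not by `ω ^ ω ^ n`. Under
this valuation each clause of the term order, coefficient condition on `k₀` included, becomes a
true comparison of ordinals, so the valuation is strictly monotone and, the term order being
total, an order embedding. Onto `Ω`: a nonzero ordinal below `Ω` is either a successor or divisible
by `ω ^ ω ^ p` but not by `ω ^ ω ^ (p + 1)` for some `p`, so it is the value of `ϑ₀ β` or of
`ϑ₀ ϑ₁^(p+1) β` for a term `β` in `T_2[0]` of smaller value.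
-/

namespace TTerm

open Ordinal Order

universe u

noncomputable section

def tower (p : ℕ) : Ordinal.{u} := ω ^ ω ^ (p : Ordinal)

section OrdinalArithmetic

variable {p q : ℕ} {α β δ o T : Ordinal.{u}}

theorem tower_pos (p : ℕ) : 0 < tower.{u} p := opow_pos _ omega0_pos

theorem tower_ne_zero (p : ℕ) : tower.{u} p ≠ 0 := (tower_pos p).ne'

theorem tower_zero : tower.{u} 0 = ω := by simp [tower]

theorem one_lt_tower (p : ℕ) : 1 < tower.{u} p :=
  one_lt_omega0.trans_le (left_le_opow _ (opow_pos _ omega0_pos))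

theorem tower_succ (p : ℕ) : tower.{u} (p + 1) = tower p ^ ω := by
  rw [tower, tower, ← opow_mul, Nat.cast_succ, opow_add_one]

theorem tower_dvd_tower (h : p ≤ q) : tower.{u} p ∣ tower q :=
  opow_dvd_opow _ (opow_le_opow_right omega0_pos (Nat.cast_le.2 h))

theorem tower_dvd_omega0_opow_opow (p : ℕ) : tower.{u} p ∣ ω ^ ω ^ ω :=
  opow_dvd_opow _ (opow_le_opow_right omega0_pos (natCast_lt_omega0 p).le)

theorem tower_mul_tower_succ (p : ℕ) : tower.{u} p * tower (p + 1) = tower (p + 1) :=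
  mul_eq_right_iff_opow_omega0_dvd.2 (tower_succ p ▸ dvd_rfl)

theorem add_lt_tower (hα : α < tower p) (hβ : β < tower p) : α + β < tower p :=
  isPrincipal_add_omega0_opow _ hα hβ

theorem exists_lt_tower (ho : o < ω ^ ω ^ ω) : ∃ n, o < tower n := by
  obtain ⟨e, he, hoe⟩ := (lt_opow_of_isSuccLimit omega0_ne_zero
    (isSuccLimit_opow_left isSuccLimit_omega0 omega0_ne_zero)).1 ho
  obtain ⟨e', he', hee'⟩ := (lt_opow_of_isSuccLimit omega0_ne_zero isSuccLimit_omega0).1 he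
  obtain ⟨n, rfl⟩ := lt_omega0.1 he'
  exact ⟨n, hoe.trans_le (opow_le_opow_right omega0_pos hee'.le)⟩

theorem exists_tower_dvd_not_dvd (ho : IsSuccLimit o) (ho' : o < ω ^ ω ^ ω) :
    ∃ p, tower p ∣ o ∧ ¬ tower (p + 1) ∣ o := by
  classical
  obtain ⟨R, hR⟩ := exists_lt_tower ho'
  have hex : ∃ n, ¬ tower n ∣ o := ⟨R, fun h => (le_of_dvd ho.ne_bot h).not_gt hR⟩
  have h0 : tower 0 ∣ o := tower_zero ▸ isSuccPrelimit_iff_omega0_dvd.1 ho.isSuccPrelimit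
  obtain ⟨p, hp⟩ : ∃ p, Nat.find hex = p + 1 :=
    Nat.exists_eq_add_one_of_ne_zero fun h => Nat.find_spec hex (h ▸ h0)
  exact ⟨p, not_not.1 (Nat.find_min hex (hp ▸ p.lt_succ_self)), hp ▸ Nat.find_spec hex⟩

theorem tower_mul_one_add_lt (hδ : δ < tower (p + 1)) : tower p * (1 + δ) < tower (p + 1) :=
  calc tower p * (1 + δ) < tower p * tower (p + 1) :=
        mul_lt_mul_of_pos_left (add_lt_tower (one_lt_tower _) hδ) (tower_pos p)
    _ = tower (p + 1) := tower_mul_tower_succ p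

-- Otherwise `tower p * δ = δ`, so `tower p ^ ω = tower (p + 1)` would divide `δ`.
theorem lt_tower_mul_one_add (hδ : δ < tower (p + 1)) : δ < tower p * (1 + δ) := by
  by_contra! h
  have hfix : tower p * δ = δ :=
    le_antisymm ((mul_le_mul_right le_add_self _).trans h) (Ordinal.le_mul_right δ (tower_pos p))
  have hdvd : tower (p + 1) ∣ δ := tower_succ p ▸ mul_eq_right_iff_opow_omega0_dvd.1 hfix
  obtain rfl : δ = 0 := by
    by_contra h0
    exact (le_of_dvd h0 hdvd).not_gt hδ
  simp [tower_ne_zero] at h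

/-- The increasing enumeration of the ordinals divisible by `tower p` but not by `tower (p + 1)`:
the values of the terms `ϑ₀ ϑ₁^(p+1) β`. -/
def collapse (p : ℕ) (α : Ordinal.{u}) : Ordinal.{u} :=
  tower (p + 1) * (α / tower (p + 1)) + tower p * (1 + α % tower (p + 1))

theorem collapse_lt_mul_succ_div (p : ℕ) (α : Ordinal.{u}) :
    collapse p α < tower (p + 1) * succ (α / tower (p + 1)) := by
  rw [mul_succ]
  exact add_lt_add_right (tower_mul_one_add_lt (mod_lt α (tower_ne_zero _))) _

theorem lt_collapse (p : ℕ) (α : Ordinal.{u}) : α < collapse p α := by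
  conv_lhs => rw [← div_add_mod α (tower (p + 1))]
  exact add_lt_add_right (lt_tower_mul_one_add (mod_lt α (tower_ne_zero _))) _

theorem collapse_strictMono (p : ℕ) : StrictMono (collapse.{u} p) := by
  intro α β h
  set T := tower.{u} (p + 1)
  have hq : α / T ≤ β / T := (mul_le_iff_le_div (tower_ne_zero _)).1 ((mul_div_le α T).trans h.le)
  rcases hq.lt_or_eq with hq | hq
  · calc collapse p α < T * succ (α / T) := collapse_lt_mul_succ_div p α
      _ ≤ T * (β / T) := mul_le_mul_right (succ_le_of_lt hq) _
      _ ≤ collapse p β := le_self_add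
  · have hρ : α % T < β % T := by
      rw [← div_add_mod α T, ← div_add_mod β T, hq] at h
      exact (add_lt_add_iff_left _).1 h
    unfold collapse
    rw [hq]
    gcongr
    exact tower_pos p

theorem collapse_lt_of_dvd (hT : tower (p + 1) ∣ T) (hα : α < T) : collapse p α < T := by
  obtain ⟨K, rfl⟩ := hT
  have hq : α / tower (p + 1) < K := (lt_mul_iff_div_lt (tower_ne_zero _)).1 hα
  exact (collapse_lt_mul_succ_div p α).trans_le (mul_le_mul_right (succ_le_of_lt hq) _)

theorem tower_dvd_collapse (p : ℕ) (α : Ordinal.{u}) : tower p ∣ collapse p α :=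
  dvd_add (dvd_mul_of_dvd_left (tower_dvd_tower p.le_succ) _) (dvd_mul_right _ _)

theorem exists_collapse_eq (hp : tower p ∣ o) (hp' : ¬ tower (p + 1) ∣ o) :
    ∃ α, collapse p α = o := by
  set T := tower.{u} (p + 1)
  have hρT : o % T < T := mod_lt o (tower_ne_zero _)
  have hρ : tower p ∣ o % T := by
    rw [← div_add_mod o T] at hp
    exact (dvd_add_iff (dvd_mul_of_dvd_left (tower_dvd_tower p.le_succ) _)).1 hp
  obtain ⟨η, hη⟩ := hρ
  have hη0 : η ≠ 0 := by
    rintro rfl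
    exact hp' (dvd_iff_mod_eq_zero.2 (by simpa using hη))
  set δ := η - 1
  have hδ : 1 + δ = η := Ordinal.add_sub_cancel_of_le (one_le_iff_ne_zero.2 hη0)
  have hδT : δ < T :=
    calc δ ≤ η := le_add_self.trans_eq hδ
      _ ≤ tower p * η := Ordinal.le_mul_right η (tower_pos p)
      _ = o % T := hη.symm
      _ < T := hρT
  refine ⟨T * (o / T) + δ, ?_⟩
  have hdiv : (T * (o / T) + δ) / T = o / T := by
    rw [mul_add_div _ (tower_ne_zero _), div_eq_zero_of_lt hδT, add_zero]
  have hmod : (T * (o / T) + δ) % T = δ := by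
    rw [mul_add_mod_self, mod_eq_of_lt hδT]
  rw [collapse, hdiv, hmod, hδ, ← hη, div_add_mod]

def thetaStep : ℕ → Ordinal.{u} → Ordinal.{u}
  | 0, α => succ α
  | p + 1, α => collapse p α

theorem lt_thetaStep : ∀ (n : ℕ) (α : Ordinal.{u}), α < thetaStep n α
  | 0, α => lt_succ α
  | p + 1, α => lt_collapse p α

theorem thetaStep_strictMono : ∀ n : ℕ, StrictMono (thetaStep.{u} n)
  | 0 => succ_strictMono
  | p + 1 => collapse_strictMono p

theorem thetaStep_lt_of_dvd : ∀ {n : ℕ}, tower n ∣ T → α < T → thetaStep n α < T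
  | 0, hT, hα => (isSuccLimit_iff.2 ⟨(hα.trans_le' zero_le).ne',
      isSuccPrelimit_iff_omega0_dvd.2 (tower_zero ▸ hT)⟩).succ_lt hα
  | _ + 1, hT, hα => collapse_lt_of_dvd hT hα

theorem exists_thetaStep_eq (ho : o ≠ 0) (ho' : o < ω ^ ω ^ ω) : ∃ n α, thetaStep n α = o := by
  rcases zero_or_succ_or_isSuccLimit o with rfl | ⟨α, rfl⟩ | hlim
  · exact absurd rfl ho
  · exact ⟨0, α, rfl⟩
  · obtain ⟨p, hp, hp'⟩ := exists_tower_dvd_not_dvd hlim ho'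
    obtain ⟨α, hα⟩ := exists_collapse_eq hp hp'
    exact ⟨p + 1, α, hα⟩

end OrdinalArithmetic

theorem wf_of_idxBound_two : ∀ {t : TTerm}, idxBound 2 t → WF t
  | zero, _ => WF.zero
  | theta _ zero, _ => WF.theta WF.zero (by simp only [S]; omega)
  | theta _ (theta j a), ⟨_, hj, ha⟩ =>
    WF.theta (wf_of_idxBound_two ⟨hj, ha⟩) (by simp only [S]; omega)

theorem idxBound_k {n i : ℕ} : ∀ {t : TTerm}, idxBound n t → idxBound n (k i t)
  | zero, h => h
  | theta j b, h => by
    rw [k]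
    split
    · exact h
    · exact idxBound_k h.2

theorem k_eq_self {i : ℕ} : ∀ {t : TTerm}, idxBound (i + 1) t → k i t = t
  | zero, _ => rfl
  | theta _ _, ⟨hj, _⟩ => if_pos (Nat.lt_succ_iff.1 hj)

theorem idxBound_iterate_theta_one (m : ℕ) {t : TTerm} (h : idxBound 2 t) :
    idxBound 2 ((theta 1)^[m] t) := by
  induction m with
  | zero => exact h
  | succ m ih => exact Function.iterate_succ_apply' (theta 1) m t ▸ ⟨one_lt_two, ih⟩

/-- `thetaValue n t` is the value of `ϑ₀ (ϑ₁^n t)`. -/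
def thetaValue : ℕ → TTerm → Ordinal.{u}
  | n, zero => thetaStep n 0
  | n, theta 0 x => thetaStep n (thetaValue 0 x)
  | n, theta 1 z => thetaValue (n + 1) z
  | _, theta (_ + 2) _ => 0

def value : TTerm → Ordinal.{u}
  | zero => 0
  | theta 0 x => thetaValue 0 x
  | theta 1 z => ω ^ ω ^ ω * (1 + value z)
  | theta (_ + 2) _ => 0

theorem thetaValue_eq_thetaStep_value {n : ℕ} :
    ∀ {t : TTerm}, S t ≤ 0 → thetaValue.{u} n t = thetaStep n (value t)
  | zero, _ => rfl
  | theta 0 _, _ => rfl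
  | theta (_ + 1) _, h => by simp [S] at h; omega

theorem thetaValue_iterate_theta_one (n m : ℕ) (t : TTerm) :
    thetaValue.{u} n ((theta 1)^[m] t) = thetaValue (n + m) t := by
  induction m generalizing n with
  | zero => rfl
  | succ m ih =>
    rw [Function.iterate_succ_apply', thetaValue, ih, Nat.add_right_comm, Nat.add_assoc]

theorem value_k_lt_thetaValue : ∀ {t : TTerm} (n : ℕ), idxBound 2 t →
    value.{u} (k 0 t) < thetaValue n t
  | zero, n, _ => lt_thetaStep n 0
  | theta 0 _, n, _ => lt_thetaStep n _
  | theta 1 _, n, ⟨_, hz⟩ => value_k_lt_thetaValue (n + 1) hz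

theorem tower_dvd_thetaValue : ∀ {t : TTerm} (n : ℕ), idxBound 2 t →
    tower.{u} n ∣ thetaValue (n + 1) t
  | zero, n, _ => tower_dvd_collapse n 0
  | theta 0 _, n, _ => tower_dvd_collapse n _
  | theta 1 _, n, ⟨_, hz⟩ => (tower_dvd_tower n.le_succ).trans (tower_dvd_thetaValue (n + 1) hz)

theorem thetaValue_lt : ∀ {t : TTerm} (n : ℕ), idxBound 2 t → thetaValue.{u} n t < ω ^ ω ^ ω
  | zero, n, _ => thetaStep_lt_of_dvd (tower_dvd_omega0_opow_opow n) (opow_pos _ omega0_pos)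
  | theta 0 _, n, ⟨_, hx⟩ => thetaStep_lt_of_dvd (tower_dvd_omega0_opow_opow n) (thetaValue_lt 0 hx)
  | theta 1 _, n, ⟨_, hz⟩ => thetaValue_lt (n + 1) hz

theorem value_lt : ∀ {t : TTerm}, idxBound 2 t → S t ≤ 0 → value.{u} t < ω ^ ω ^ ω
  | zero, _, _ => opow_pos _ omega0_pos
  | theta 0 _, ⟨_, hx⟩, _ => thetaValue_lt 0 hx
  | theta (_ + 1) _, _, h => by simp [S] at h; omega

theorem le_value_theta_one (z : TTerm) : ω ^ ω ^ ω ≤ value.{u} (theta 1 z) :=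
  Ordinal.le_mul_left _ (zero_lt_one.trans_le le_self_add)

theorem value_pos : ∀ {t : TTerm}, idxBound 2 t → t ≠ zero → 0 < value.{u} t
  | zero, _, h => absurd rfl h
  | theta 0 _, ⟨_, hx⟩, _ => (value_k_lt_thetaValue 0 hx).trans_le' zero_le
  | theta 1 z, _, _ => (le_value_theta_one z).trans_lt' (opow_pos _ omega0_pos)

theorem value_theta_one_lt_value_theta_one {x y : TTerm} :
    value.{u} (theta 1 x) < value (theta 1 y) ↔ value.{u} x < value y := by
  simp only [value]
  rw [mul_lt_mul_iff_right₀ (opow_pos _ omega0_pos), add_lt_add_iff_left]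

theorem value_lt_value_theta_one : ∀ {t : TTerm}, idxBound 2 t → value.{u} t < value (theta 1 t)
  | zero, _ => (le_value_theta_one zero).trans_lt' (opow_pos _ omega0_pos)
  | theta 0 _, ⟨_, hx⟩ => (le_value_theta_one _).trans_lt' (thetaValue_lt 0 hx)
  | theta 1 _, ⟨_, hz⟩ => value_theta_one_lt_value_theta_one.2 (value_lt_value_theta_one hz)

theorem thetaStep_value_lt_thetaValue {a : TTerm} (n : ℕ) :
    ∀ {b : TTerm}, idxBound 2 b → value.{u} a < value b → value.{u} a < thetaValue n b →
      thetaStep n (value.{u} a) < thetaValue n b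
  | zero, _, h, _ => thetaStep_strictMono n h
  | theta 0 _, _, h, _ => thetaStep_strictMono n h
  | theta 1 _, ⟨_, hy⟩, _, h => thetaStep_lt_of_dvd (tower_dvd_thetaValue n hy) h

theorem thetaValue_lt_thetaValue : ∀ {a b : TTerm} (n : ℕ), idxBound 2 a → idxBound 2 b →
    value.{u} a < value b → value.{u} (k 0 a) < thetaValue n b → thetaValue.{u} n a < thetaValue n b
  | zero, _, n, _, hb, h, hk => thetaStep_value_lt_thetaValue n hb h hk
  | theta 0 _, _, n, _, hb, h, hk => thetaStep_value_lt_thetaValue n hb h hk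
  | theta 1 _, zero, _, _, _, h, _ => absurd h zero_le.not_gt
  | theta 1 x, theta 0 _, _, _, ⟨_, hy⟩, h, _ =>
    absurd ((le_value_theta_one x).trans_lt h) (thetaValue_lt 0 hy).asymm
  | theta 1 _, theta 1 _, n, ⟨_, hx⟩, ⟨_, hy⟩, h, hk =>
    thetaValue_lt_thetaValue (n + 1) hx hy (value_theta_one_lt_value_theta_one.1 h) hk

mutual

theorem value_lt_value_of_lt : ∀ {a b : TTerm}, Lt a b → idxBound 2 a → idxBound 2 b →
    value.{u} a < value b
  | _, _, .zero hb0, _, hb => value_pos hb hb0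
  | theta i _, theta j _, .idx hij, ⟨hi, hx⟩, ⟨hj, _⟩ => by
    obtain ⟨rfl, rfl⟩ : i = 0 ∧ j = 1 := by omega
    exact (le_value_theta_one _).trans_lt' (thetaValue_lt 0 hx)
  | theta 0 _, theta 0 _, .left hxy hk, ⟨_, hx⟩, hb@⟨_, hy⟩ =>
    thetaValue_lt_thetaValue 0 hx hy (value_lt_value_of_lt hxy hx hy)
      (value_lt_value_of_lt hk (idxBound_k hx) hb)
  | theta 1 _, theta 1 _, .left hxy _, ⟨_, hx⟩, ⟨_, hy⟩ =>
    value_theta_one_lt_value_theta_one.2 (value_lt_value_of_lt hxy hx hy)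
  | theta 0 _, theta 0 _, .right _ hk, ha, ⟨_, hy⟩ =>
    (value_le_value_of_le hk ha (idxBound_k hy)).trans_lt (value_k_lt_thetaValue 0 hy)
  | theta 1 _, theta 1 y, .right _ hk, ha, ⟨_, hy⟩ =>
    calc value (theta 1 _) ≤ value (k 1 y) := value_le_value_of_le hk ha (idxBound_k hy)
      _ = value y := by rw [k_eq_self hy]
      _ < value (theta 1 y) := value_lt_value_theta_one hy
  | theta (_ + 2) _, _, .left _ _, ⟨hi, _⟩, _ => absurd hi (by omega)
  | theta (_ + 2) _, _, .right _ _, ⟨hi, _⟩, _ => absurd hi (by omega)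

theorem value_le_value_of_le : ∀ {a b : TTerm}, Le a b → idxBound 2 a → idxBound 2 b →
    value.{u} a ≤ value b
  | _, _, .refl, _, _ => le_rfl
  | _, _, .of_lt h, ha, hb => (value_lt_value_of_lt h ha hb).le

end

theorem sizeOf_k_le (i : ℕ) : ∀ t : TTerm, sizeOf (k i t) ≤ sizeOf t
  | zero => le_rfl
  | theta j b => by
    rw [k]
    split
    · exact le_rfl
    · exact (sizeOf_k_le i b).trans (by simp)

theorem lt_trichotomy (a b : TTerm) : Lt a b ∨ a = b ∨ Lt b a :=
  match a, b with
  | zero, zero => .inr (.inl rfl)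
  | zero, theta _ _ => .inl (.zero (by simp))
  | theta _ _, zero => .inr (.inr (.zero (by simp)))
  | theta i x, theta j y => by
    rcases Nat.lt_trichotomy i j with hij | rfl | hij
    · exact .inl (.idx hij)
    · rcases lt_trichotomy x y with hxy | rfl | hyx
      · rcases lt_trichotomy (k i x) (theta i y) with hk | hk | hk
        · exact .inl (.left hxy hk)
        · exact .inr (.inr (.right hxy (hk ▸ .refl)))
        · exact .inr (.inr (.right hxy (.of_lt hk)))
      · exact .inr (.inl rfl)
      · rcases lt_trichotomy (k i y) (theta i x) with hk | hk | hk
        · exact .inr (.inr (.left hyx hk))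
        · exact .inl (.right hyx (hk ▸ .refl))
        · exact .inl (.right hyx (.of_lt hk))
    · exact .inr (.inr (.idx hij))
termination_by sizeOf a + sizeOf b
decreasing_by all_goals simp_wf; have := sizeOf_k_le i x; have := sizeOf_k_le i y; omega

theorem lt_iff_value_lt {a b : TTerm} (ha : idxBound 2 a) (hb : idxBound 2 b) :
    Lt a b ↔ value.{u} a < value b := by
  refine ⟨fun h => value_lt_value_of_lt h ha hb, fun h => ?_⟩
  rcases lt_trichotomy a b with hab | rfl | hba
  · exact hab
  · exact absurd h (lt_irrefl _)
  · exact absurd h (value_lt_value_of_lt hba hb ha).asymm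

theorem exists_value_eq {o : Ordinal.{u}} (ho : o < ω ^ ω ^ ω) :
    ∃ t, idxBound 2 t ∧ S t ≤ 0 ∧ value t = o := by
  induction o using WellFoundedLT.induction with
  | _ o ih =>
    rcases eq_or_ne o 0 with rfl | ho0
    · exact ⟨zero, trivial, by simp [S], rfl⟩
    obtain ⟨n, α, rfl⟩ := exists_thetaStep_eq ho0 ho
    have hα := lt_thetaStep n α
    obtain ⟨w, hw, hwS, rfl⟩ := ih α hα (hα.trans ho)
    refine ⟨theta 0 ((theta 1)^[n] w), ⟨two_pos, idxBound_iterate_theta_one n hw⟩, le_rfl, ?_⟩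
    rw [value, thetaValue_iterate_theta_one, zero_add, thetaValue_eq_thetaStep_value hwS]

end

end TTerm

open Ordinal in
/-- The order type of `(T_2[0], <)` is exactly `ω^(ω^ω)`: there is an order-preserving
bijection onto the ordinals below `ω^(ω^ω)`. -/
theorem stmt9 :
    ∃ f : {t : TTerm // T2zero t} → Set.Iio (omega0 ^ omega0 ^ omega0 : Ordinal),
      Function.Surjective f ∧
        ∀ a b : {t : TTerm // T2zero t}, TTerm.Lt a.1 b.1 ↔ (f a : Ordinal) < f b := by
  refine ⟨fun a => ⟨TTerm.value a.1, TTerm.value_lt a.2.2.1 a.2.2.2⟩, ?_,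
    fun a b => TTerm.lt_iff_value_lt a.2.2.1 b.2.2.1⟩
  rintro ⟨o, ho⟩
  obtain ⟨t, ht, hS, rfl⟩ := TTerm.exists_value_eq ho
  exact ⟨⟨t, TTerm.wf_of_idxBound_two ht, ht, hS⟩, rfl⟩
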